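/- arXiv:1411.6840 — 2 statements merged into one kernel-verified Lean document; each statement's English description precedes it below -/
import Mathlib

section
/- Let R = ℚ(λ₁,…,λ_m, z)[v] / (∏_{i=1}^m (v+λ_i)), where λ₁,…,λ_m, z, v are indeterminates. Define I(y) = ∑_{d=0}^∞ y^d / ∏_{i=1}^m ∏_{c=1}^d (v + λ_i + cz) in R[[y]] (the products for d=0 are empty, so I(0)=1). Then the differential operator identity ∏_{i=1}^m (z·y·d/dy + v + λ_i) I(y) = y·I(y) holds in R[[y]]. -/
noncomputable section

open Finset Polynomial PowerSeries

/-- The field `ℚ(λ₁,…,λ_m,z)`: the fraction field of `ℚ[λ₁,…,λ_m,z]`,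
where `some i ↦ λ_i` and `none ↦ z`. -/
abbrev Kfld (m : ℕ) := FractionRing (MvPolynomial (Option (Fin m)) ℚ)

/-- The equivariant parameter `λ_i`. -/
def lam (m : ℕ) (i : Fin m) : Kfld m :=
  algebraMap (MvPolynomial (Option (Fin m)) ℚ) (Kfld m) (MvPolynomial.X (some i))

/-- The loop-rotation parameter `z`. -/
def zz (m : ℕ) : Kfld m :=
  algebraMap (MvPolynomial (Option (Fin m)) ℚ) (Kfld m) (MvPolynomial.X none)

/-- The ring `R = ℚ(λ₁,…,λ_m,z)[v] / (∏_{i=1}^m (v+λ_i))`. -/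
abbrev Rring (m : ℕ) :=
  Polynomial (Kfld m) ⧸ Ideal.span {∏ i : Fin m, (Polynomial.X + Polynomial.C (lam m i))}

/-- The class `v`, the image of the variable of `ℚ(λ,z)[v]` in `R`. -/
def vcl (m : ℕ) : Rring m :=
  Ideal.Quotient.mk _ (Polynomial.X : Polynomial (Kfld m))

/-- The structure map `ℚ(λ₁,…,λ_m,z) → R`. -/
def ι (m : ℕ) : Kfld m →+* Rring m :=
  (Ideal.Quotient.mk _).comp (Polynomial.C : Kfld m →+* Polynomial (Kfld m))

/-- The `I`-function `I(y) = ∑_{d≥0} y^d / ∏_{i=1}^m ∏_{c=1}^d (v+λ_i+cz)` in `R[[y]]`. -/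
def Ifun (m : ℕ) : PowerSeries (Rring m) :=
  PowerSeries.mk fun d =>
    Ring.inverse (∏ i : Fin m, ∏ c ∈ Finset.Icc 1 d, (vcl m + ι m (lam m i + (c : ℕ) * zz m)))

/-- The operator `y·d/dy` on `R[[y]]`, i.e. `∑ a_d y^d ↦ ∑ d·a_d y^d`. -/
def thetaOp (m : ℕ) (f : PowerSeries (Rring m)) : PowerSeries (Rring m) :=
  PowerSeries.mk fun d => (d : Rring m) * PowerSeries.coeff (R := Rring m) d f

/-- The operator `z·y·d/dy + v + λ_i` on `R[[y]]`. -/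
def Lop (m : ℕ) (i : Fin m) (f : PowerSeries (Rring m)) : PowerSeries (Rring m) :=
  PowerSeries.C (R := Rring m) (ι m (zz m)) * thetaOp m f
    + PowerSeries.C (R := Rring m) (vcl m + ι m (lam m i)) * f


/-!
Every operator `z·y·d/dy + v + λ_i` acts diagonally on the monomials `y^d`, by multiplication
with `v + λ_i + d z`. Hence the coefficient of `y^d` on the left is `∏_i (v + λ_i + d z)` times
that of `I`. For `d = 0` this is `∏_i (v + λ_i) = 0` in `R`, matching the zero constant term of
`y·I`. For `d ≥ 1` the factors `v + λ_i + d z` are units of `R`, since `X + λ_i + d z` is coprime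
to every `X + λ_j`, and they cancel exactly the last factor of the denominator of the `d`-th
coefficient of `I`.
-/

theorem PowerSeries.coeff_foldr_ofFn_of_coeff_eq_mul {R : Type*} [CommSemiring R] {m : ℕ}
    (L : Fin m → R⟦X⟧ → R⟦X⟧) (μ : Fin m → ℕ → R)
    (hL : ∀ i f d, coeff d (L i f) = μ i d * coeff d f) (f : R⟦X⟧) (d : ℕ) :
    coeff d ((List.ofFn L).foldr (fun op g => op g) f) = (∏ i, μ i d) * coeff d f := by
  induction m with
  | zero => simp
  | succ m ih =>
    rw [List.ofFn_succ, List.foldr_cons, hL, ih (fun i => L i.succ) (fun i => μ i.succ)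
      (fun i => hL i.succ), Fin.prod_univ_succ, mul_assoc]

theorem IsCoprime.isUnit_quotient_mk_span_singleton {R : Type*} [CommRing R] {a b : R}
    (h : IsCoprime a b) : IsUnit (Ideal.Quotient.mk (Ideal.span {b}) a) := by
  obtain ⟨u, w, huw⟩ := h
  have hb : Ideal.Quotient.mk (Ideal.span {b}) b = 0 :=
    Ideal.Quotient.eq_zero_iff_mem.mpr (Ideal.mem_span_singleton_self b)
  refine IsUnit.of_mul_eq_one_right (Ideal.Quotient.mk _ u) ?_
  simpa only [map_add, map_mul, map_one, hb, mul_zero, add_zero] using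
    congrArg (Ideal.Quotient.mk (Ideal.span {b})) huw

theorem Polynomial.isCoprime_X_add_C_prod_X_add_C {K ι : Type*} [Field K] [Fintype ι]
    {a : ι → K} {b : K} (hb : ∀ i, b ≠ a i) : IsCoprime (X + C b) (∏ i, (X + C (a i))) :=
  IsCoprime.prod_right fun i _ => by
    simpa only [map_neg, sub_neg_eq_add] using
      isCoprime_X_sub_C_of_isUnit_sub (sub_ne_zero.mpr (neg_injective.ne (hb i))).isUnit

theorem lam_add_mul_zz_ne_lam (m : ℕ) (i j : Fin m) {c : ℕ} (hc : c ≠ 0) :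
    lam m i + c * zz m ≠ lam m j := by
  intro h
  have hpoly : (MvPolynomial.X (some i) + (c : MvPolynomial (Option (Fin m)) ℚ) *
      MvPolynomial.X none) = MvPolynomial.X (some j) := by
    apply IsFractionRing.injective (MvPolynomial (Option (Fin m)) ℚ) (Kfld m)
    simpa [lam, zz] using h
  have := congrArg (MvPolynomial.eval (fun o => o.elim 1 fun _ => 0)) hpoly
  exact hc (by simpa using this)

theorem vcl_add_ι (m : ℕ) (a : Kfld m) :
    vcl m + ι m a = Ideal.Quotient.mk _ (Polynomial.X + Polynomial.C a) := by
  simp [vcl, ι]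

theorem prod_vcl_add_ι_lam (m : ℕ) : ∏ i, (vcl m + ι m (lam m i)) = 0 := by
  simp only [vcl_add_ι, ← map_prod]
  exact Ideal.Quotient.eq_zero_iff_mem.mpr (Ideal.mem_span_singleton_self _)

theorem isUnit_vcl_add_ι_lam_add_mul_zz (m : ℕ) (i : Fin m) {c : ℕ} (hc : c ≠ 0) :
    IsUnit (vcl m + ι m (lam m i + c * zz m)) := by
  rw [vcl_add_ι]
  exact (isCoprime_X_add_C_prod_X_add_C
    fun j => lam_add_mul_zz_ne_lam m i j hc).isUnit_quotient_mk_span_singleton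

theorem coeff_Lop (m : ℕ) (i : Fin m) (f : PowerSeries (Rring m)) (d : ℕ) :
    coeff d (Lop m i f) = (vcl m + ι m (lam m i + d * zz m)) * coeff d f := by
  rw [Lop, map_add, PowerSeries.coeff_C_mul, PowerSeries.coeff_C_mul, thetaOp, coeff_mk,
    map_add, map_mul, map_natCast]
  ring

theorem prod_mul_coeff_succ_Ifun (m d : ℕ) :
    (∏ i, (vcl m + ι m (lam m i + (d + 1 : ℕ) * zz m))) * coeff (d + 1) (Ifun m)
      = coeff d (Ifun m) := by
  have hunit : IsUnit (∏ i, (vcl m + ι m (lam m i + (d + 1 : ℕ) * zz m))) :=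
    IsUnit.prod_univ_iff.mpr fun i => isUnit_vcl_add_ι_lam_add_mul_zz m i d.succ_ne_zero
  simp only [Ifun, coeff_mk, prod_Icc_succ_top (Nat.le_add_left 1 d), prod_mul_distrib]
  rw [Ring.inverse_mul (Or.inr hunit), Ring.mul_inverse_cancel_left _ _ hunit]

/-- The quantum differential equation for the `I`-function of `ℙ^{m-1}`:
`∏_{i=1}^m (z·y·d/dy + v + λ_i) I(y) = y·I(y)`. -/
theorem stmt2 (m : ℕ) :
    (List.ofFn (fun i : Fin m => Lop m i)).foldr (fun op g => op g) (Ifun m)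
      = PowerSeries.X * Ifun m := by
  ext d
  rw [coeff_foldr_ofFn_of_coeff_eq_mul (Lop m) _ (coeff_Lop m)]
  cases d with
  | zero =>
    simp only [Nat.cast_zero, zero_mul, add_zero]
    rw [prod_vcl_add_ι_lam, coeff_zero_X_mul]
    exact zero_mul (M₀ := Rring m) _
  | succ d => rw [coeff_succ_X_mul, prod_mul_coeff_succ_Ifun]
end
end

section
/- Let m be a positive integer and u a nonzero rational number, and let α ∈ ℚ[z][λ] satisfy m·α(λ,z) − u·(α(λ−z, z) − α(λ, z))/z = 0 (the difference quotient being a genuine polynomial). Then α = 0. -/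
open Polynomial

/-- In `ℚ[z][λ]` (outer variable `X = λ`, `z = C X`), if `α` satisfies
`m·α − u·(α(λ−z) − α(λ))/z = 0`, where `β = (α(λ−z) − α(λ))/z` is a genuine
polynomial, then `α = 0`. -/
theorem stmt15 (m : ℕ) (hm : 0 < m) (u : ℚ) (hu : u ≠ 0)
    (α β : Polynomial (Polynomial ℚ))
    (hβ : Polynomial.C (Polynomial.X : Polynomial ℚ) * β =
      α.comp (Polynomial.X - Polynomial.C (Polynomial.X : Polynomial ℚ)) - α)
    (h : (m : Polynomial (Polynomial ℚ)) * α - Polynomial.C (Polynomial.C u) * β = 0) :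
    α = 0 := by
  by_contra hα
  set q : Polynomial (Polynomial ℚ) :=
    Polynomial.X - Polynomial.C (Polynomial.X : Polynomial ℚ) with hq
  have hmα : (m : Polynomial (Polynomial ℚ)) * α = Polynomial.C (Polynomial.C u) * β :=
    sub_eq_zero.mp h
  have hm0 : (m : Polynomial (Polynomial ℚ)) ≠ 0 := by
    exact_mod_cast Nat.cast_ne_zero.mpr hm.ne'
  have hβ0 : β ≠ 0 := by
    intro h0
    rw [h0, mul_zero, mul_eq_zero] at hmα
    exact hα (hmα.resolve_left hm0)
  have hqm : q.Monic := monic_X_sub_C _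
  have hqd : q.natDegree = 1 := natDegree_X_sub_C _
  have hlc : (α.comp q).leadingCoeff = α.leadingCoeff := by
    rw [leadingCoeff_comp (by rw [hqd]; norm_num), hqm.leadingCoeff, one_pow, mul_one]
  have hcomp0 : α.comp q ≠ 0 := by
    intro h0
    apply hα
    have h1 := hlc
    rw [h0, leadingCoeff_zero] at h1
    exact leadingCoeff_eq_zero.mp h1.symm
  have hdcomp : (α.comp q).degree = α.degree := by
    rw [degree_eq_natDegree hcomp0, degree_eq_natDegree hα, natDegree_comp, hqd, mul_one]
  have hsub : (α.comp q - α).degree < α.degree := by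
    have h2 := degree_sub_lt hdcomp hcomp0 hlc
    rwa [hdcomp] at h2
  have hzb : (Polynomial.C (Polynomial.X : Polynomial ℚ) * β).degree = β.degree := by
    rw [degree_mul, degree_C X_ne_zero, zero_add]
  have hdegβ : β.degree < α.degree := by
    rw [← hzb, hβ]; exact hsub
  have hmQ : (m : ℚ) ≠ 0 := Nat.cast_ne_zero.mpr hm.ne'
  have hmc : (m : Polynomial (Polynomial ℚ)) =
      Polynomial.C (Polynomial.C (m : ℚ)) := by simp
  have hdeq : α.degree = β.degree := by
    have h3 := congrArg Polynomial.degree hmα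
    rw [hmc, degree_mul, degree_mul, degree_C (C_ne_zero.mpr hmQ),
      degree_C (C_ne_zero.mpr hu), zero_add, zero_add] at h3
    exact h3
  rw [hdeq] at hdegβ
  exact lt_irrefl _ hdegβ
end
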